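/- arXiv:2502.12162 — 2 statements merged into one kernel-verified Lean document; each statement's English description precedes it below -/
import Mathlib

section
/- Let k be a field and n ≥ 1. For m ≥ 1 put A_m = k[X]/(Xᵐ), let c_m : A_m → k read off the coefficient of X^{m−1}, and let Φ_m : A_m → Homₖ(A_m,k) be the A_m-module isomorphism Φ_m(p)(q) = c_m(pq), where Homₖ(A_m,k) has module structure (p·f)(q) = f(pq). Let π : A_{n+1} → A_n be the canonical projection and π* : Homₖ(A_n,k) → Homₖ(A_{n+1},k) its transpose, π*(f) = f ∘ π. Then the composite Φ_{n+1}⁻¹ ∘ π* ∘ Φ_n : A_n → A_{n+1} is the map induced by multiplication by X, i.e., it sends the class of a polynomial p to the class of X·p. -/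
open Polynomial

/-- let `A_m = k[X]/(Xᵐ)`, let `c_m` read off the coefficient of
`X^{m−1}`, and let `Φ_m : A_m ≅ Homₖ(A_m,k)` be the self-duality isomorphism
`Φ_m(p)(q) = c_m(pq)`.  Let `π : A_{n+1} → A_n` be the canonical projection and
`π*` its transpose.  Then the composite `Φ_{n+1}⁻¹ ∘ π* ∘ Φ_n : A_n → A_{n+1}`
is induced by multiplication by `X`; equivalently, for every polynomial `p` and
every `q ∈ A_{n+1}` one has `Φ_{n+1}(mk(X·p))(q) = Φ_n(mk p)(π q)`. -/
theorem dual_of_projection_is_mul_X (k : Type*) [Field k] (n : ℕ) (hn : 1 ≤ n)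
    (c₁ : (k[X] ⧸ Ideal.span {(X : k[X]) ^ n}) →ₗ[k] k)
    (hc₁ : ∀ p : k[X],
      c₁ (Ideal.Quotient.mk (Ideal.span {(X : k[X]) ^ n}) p) = p.coeff (n - 1))
    (c₂ : (k[X] ⧸ Ideal.span {(X : k[X]) ^ (n + 1)}) →ₗ[k] k)
    (hc₂ : ∀ p : k[X],
      c₂ (Ideal.Quotient.mk (Ideal.span {(X : k[X]) ^ (n + 1)}) p) = p.coeff n)
    (Φ₁ : (k[X] ⧸ Ideal.span {(X : k[X]) ^ n}) ≃ₗ[k]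
          Module.Dual k (k[X] ⧸ Ideal.span {(X : k[X]) ^ n}))
    (hΦ₁ : ∀ x y, Φ₁ x y = c₁ (x * y))
    (Φ₂ : (k[X] ⧸ Ideal.span {(X : k[X]) ^ (n + 1)}) ≃ₗ[k]
          Module.Dual k (k[X] ⧸ Ideal.span {(X : k[X]) ^ (n + 1)}))
    (hΦ₂ : ∀ x y, Φ₂ x y = c₂ (x * y)) :
    ∀ (p : k[X]) (q : k[X] ⧸ Ideal.span {(X : k[X]) ^ (n + 1)}),
      Φ₂ (Ideal.Quotient.mk (Ideal.span {(X : k[X]) ^ (n + 1)}) (X * p)) q =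
        Φ₁ (Ideal.Quotient.mk (Ideal.span {(X : k[X]) ^ n}) p)
          (Ideal.Quotient.factor
            (Ideal.span_le.mpr (Set.singleton_subset_iff.mpr
              (Ideal.mem_span_singleton.mpr (pow_dvd_pow X (Nat.le_succ n))))) q) := by
  intro p q
  obtain ⟨r, rfl⟩ := Ideal.Quotient.mk_surjective q
  obtain ⟨m, rfl⟩ := Nat.exists_eq_add_of_le' hn
  rw [Ideal.Quotient.factor_mk]
  calc Φ₂ (Ideal.Quotient.mk _ (X * p)) (Ideal.Quotient.mk _ r)
      = (X * (p * r)).coeff (m + 1) := by rw [hΦ₂, ← map_mul, hc₂, mul_assoc]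
    _ = (p * r).coeff m := coeff_X_mul _ _
    _ = Φ₁ (Ideal.Quotient.mk _ p) (Ideal.Quotient.mk _ r) := by
      rw [hΦ₁, ← map_mul, hc₁, Nat.add_sub_cancel]
end

section
/- Let k be a field and A a Hopf algebra over k. Let H be the k-vector space of A-bimodule endomorphisms F of A ⊗ₖ A, where the bimodule structure is a·(x ⊗ y)·b = ax ⊗ yb. Equip H with the operation (c·F)(r) = F(r ⋆ c), where (x ⊗ y) ⋆ c = Σ x·c₍₁₎ ⊗ S(c₍₂₎)·y. Then this operation makes H a left A-module, evaluation at 1 ⊗ 1 is a k-linear bijection H → A ⊗ₖ A, and under this bijection the left A-action on H corresponds to the action c·(u ⊗ v) = Σ c₍₁₎·u ⊗ v·S(c₍₂₎) on A ⊗ₖ A. -/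
open TensorProduct

/-- For `c : A`, the `k`-linear endomorphism `r ↦ r ⋆ c` of `A ⊗ₖ A` determined by
`(x ⊗ y) ⋆ c = Σ x·c₍₁₎ ⊗ S(c₍₂₎)·y`. -/
noncomputable def starAct (k A : Type*) [Field k] [Ring A] [HopfAlgebra k A] (c : A) :
    A ⊗[k] A →ₗ[k] A ⊗[k] A :=
  TensorProduct.map
      (LinearMap.mul' k A ∘ₗ (TensorProduct.comm k A A).toLinearMap)
      (LinearMap.mul' k A ∘ₗ TensorProduct.map (HopfAlgebra.antipode (R := k)) LinearMap.id) ∘ₗ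
    (TensorProduct.tensorTensorTensorComm k A A A A).toLinearMap ∘ₗ
    TensorProduct.mk k (A ⊗[k] A) (A ⊗[k] A) (Coalgebra.comul c)

/-- For `c : A`, the `k`-linear endomorphism of `A ⊗ₖ A` determined by
`u ⊗ v ↦ Σ c₍₁₎·u ⊗ v·S(c₍₂₎)`. -/
noncomputable def coAct (k A : Type*) [Field k] [Ring A] [HopfAlgebra k A] (c : A) :
    A ⊗[k] A →ₗ[k] A ⊗[k] A :=
  TensorProduct.map
      (LinearMap.mul' k A)
      (LinearMap.mul' k A ∘ₗ (TensorProduct.comm k A A).toLinearMap ∘ₗ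
        TensorProduct.map (HopfAlgebra.antipode (R := k)) LinearMap.id) ∘ₗ
    (TensorProduct.tensorTensorTensorComm k A A A A).toLinearMap ∘ₗ
    TensorProduct.mk k (A ⊗[k] A) (A ⊗[k] A) (Coalgebra.comul c)

/-- Left multiplication `x ⊗ y ↦ ax ⊗ y` of the outer bimodule structure of `A ⊗ₖ A`. -/
noncomputable def lmulMap (k A : Type*) [Field k] [Ring A] [HopfAlgebra k A] (a : A) :
    A ⊗[k] A →ₗ[k] A ⊗[k] A :=
  TensorProduct.map (LinearMap.mulLeft k a) LinearMap.id

/-- Right multiplication `x ⊗ y ↦ x ⊗ yb` of the outer bimodule structure of `A ⊗ₖ A`. -/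
noncomputable def rmulMap (k A : Type*) [Field k] [Ring A] [HopfAlgebra k A] (b : A) :
    A ⊗[k] A →ₗ[k] A ⊗[k] A :=
  TensorProduct.map LinearMap.id (LinearMap.mulRight k b)

/-- The space `H` of `A`-bimodule endomorphisms of `A ⊗ₖ A` (for the outer bimodule
structure `a·(x ⊗ y)·b = ax ⊗ yb`), as a `k`-submodule of the `k`-linear
endomorphisms. -/
noncomputable def bimodEnd (k A : Type*) [Field k] [Ring A] [HopfAlgebra k A] :
    Submodule k ((A ⊗[k] A) →ₗ[k] A ⊗[k] A) where
  carrier := {F | (∀ (a : A) (z : A ⊗[k] A), F (lmulMap k A a z) = lmulMap k A a (F z)) ∧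
                  ∀ (b : A) (z : A ⊗[k] A), F (rmulMap k A b z) = rmulMap k A b (F z)}
  add_mem' := by
    intro F G hF hG
    refine ⟨fun a z => ?_, fun b z => ?_⟩ <;>
      simp [hF.1, hF.2, hG.1, hG.2]
  zero_mem' := by
    refine ⟨fun a z => ?_, fun b z => ?_⟩ <;> simp
  smul_mem' := by
    intro t F hF
    refine ⟨fun a z => ?_, fun b z => ?_⟩ <;>
      simp [hF.1, hF.2]

/-!
A bimodule endomorphism `F` of `A ⊗ₖ A` (outer structure) is determined by `w = F (1 ⊗ 1)`
through `F (x ⊗ y) = x·w·y`, and every `w` arises from such an `F`: this is the evaluation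
bijection. The map `r ↦ r ⋆ c` commutes with the outer actions, so precomposing with it preserves
bimodule endomorphisms, and it is contravariant in `c` because the antipode is an
anti-homomorphism. Finally `(1 ⊗ 1) ⋆ c = Σ c₍₁₎·(1 ⊗ 1)·S(c₍₂₎)`, so a bimodule endomorphism
sends it to `Σ c₍₁₎·F (1 ⊗ 1)·S(c₍₂₎)`.
-/

open Coalgebra HopfAlgebra

section

variable {k A : Type*} [Field k] [Ring A] [HopfAlgebra k A]

lemma starAct_tmul (c x y : A) {ι : Type*} (r : Coalgebra.Repr k c ι) :
    starAct k A c (x ⊗ₜ y) = ∑ i ∈ r.index, (x * r.left i) ⊗ₜ (antipode k (r.right i) * y) := by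
  simp [starAct, ← r.eq]

@[simp] lemma lmulMap_tmul (a x y : A) : lmulMap k A a (x ⊗ₜ y) = (a * x) ⊗ₜ y := rfl

@[simp] lemma rmulMap_tmul (b x y : A) : rmulMap k A b (x ⊗ₜ y) = x ⊗ₜ (y * b) := rfl

lemma lmulMap_mul (a b : A) : lmulMap k A (a * b) = lmulMap k A a ∘ₗ lmulMap k A b := by
  ext x y; simp [mul_assoc]

lemma rmulMap_mul (a b : A) : rmulMap k A (a * b) = rmulMap k A b ∘ₗ rmulMap k A a := by
  ext x y; simp [mul_assoc]

lemma lmulMap_comp_rmulMap (a b : A) :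
    lmulMap k A a ∘ₗ rmulMap k A b = rmulMap k A b ∘ₗ lmulMap k A a := by
  ext x y; simp

lemma mem_bimodEnd_iff (F : A ⊗[k] A →ₗ[k] A ⊗[k] A) :
    F ∈ bimodEnd k A ↔ (∀ a, F ∘ₗ lmulMap k A a = lmulMap k A a ∘ₗ F) ∧
      ∀ b, F ∘ₗ rmulMap k A b = rmulMap k A b ∘ₗ F := by
  simp only [bimodEnd, Submodule.mem_mk, AddSubmonoid.mem_mk, AddSubsemigroup.mem_mk,
    Set.mem_ofPred_eq, LinearMap.ext_iff, LinearMap.comp_apply]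

lemma comp_mem_bimodEnd {F G : A ⊗[k] A →ₗ[k] A ⊗[k] A} (hF : F ∈ bimodEnd k A)
    (hG : G ∈ bimodEnd k A) : F ∘ₗ G ∈ bimodEnd k A :=
  ⟨fun a z => by simp [hF.1, hG.1], fun b z => by simp [hF.2, hG.2]⟩

lemma starAct_mem_bimodEnd (c : A) : starAct k A c ∈ bimodEnd k A := by
  rw [mem_bimodEnd_iff]
  constructor <;> intro a <;> ext x y <;> simp [starAct_tmul c _ _ (ℛ k c), mul_assoc]

lemma starAct_one : starAct k A (1 : A) = LinearMap.id := by
  ext x y; simp [starAct, Bialgebra.comul_one, Algebra.TensorProduct.one_def]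

lemma starAct_mul (c c' : A) : starAct k A (c * c') = starAct k A c' ∘ₗ starAct k A c := by
  ext x y
  simp [starAct_tmul _ _ _ ((ℛ k c).mul (ℛ k c')), starAct_tmul c _ _ (ℛ k c),
    starAct_tmul c' _ _ (ℛ k c'), Finset.sum_product, antipode_mul_antidistrib, mul_assoc]

lemma starAct_add (c c' : A) : starAct k A (c + c') = starAct k A c + starAct k A c' := by
  ext x y; simp [starAct]

lemma starAct_smul (t : k) (c : A) : starAct k A (t • c) = t • starAct k A c := by
  ext x y; simp [starAct]

variable (k A) in
noncomputable def sandwich (w : A ⊗[k] A) : A ⊗[k] A →ₗ[k] A ⊗[k] A :=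
  TensorProduct.lift <| ((TensorProduct.mapBilinear (RingHom.id k) A A A A).compl₁₂
    (LinearMap.mul k A) (LinearMap.mul k A).flip).compr₂ (LinearMap.applyₗ w)

lemma sandwich_tmul (w : A ⊗[k] A) (x y : A) :
    sandwich k A w (x ⊗ₜ y) = lmulMap k A x (rmulMap k A y w) := by
  simp only [sandwich, TensorProduct.lift.tmul, LinearMap.compr₂_apply, LinearMap.compl₁₂_apply,
    TensorProduct.mapBilinear_apply, LinearMap.applyₗ_apply_apply]
  rw [lmulMap, rmulMap, ← LinearMap.comp_apply, ← TensorProduct.map_comp]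
  rfl

lemma sandwich_tmul_one_one (w : A ⊗[k] A) : sandwich k A w (1 ⊗ₜ 1) = w := by
  simp [sandwich_tmul, lmulMap, rmulMap]

lemma sandwich_mem_bimodEnd (w : A ⊗[k] A) : sandwich k A w ∈ bimodEnd k A := by
  rw [mem_bimodEnd_iff]
  refine ⟨fun a => TensorProduct.ext' fun x y => ?_, fun b => TensorProduct.ext' fun x y => ?_⟩
  · simp only [LinearMap.comp_apply, lmulMap_tmul, sandwich_tmul, lmulMap_mul]
  · simp only [LinearMap.comp_apply, rmulMap_tmul, sandwich_tmul, rmulMap_mul]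
    rw [← LinearMap.comp_apply (lmulMap k A x), lmulMap_comp_rmulMap, LinearMap.comp_apply]

lemma eq_sandwich_of_mem_bimodEnd {F : A ⊗[k] A →ₗ[k] A ⊗[k] A} (hF : F ∈ bimodEnd k A) :
    F = sandwich k A (F (1 ⊗ₜ 1)) := by
  refine TensorProduct.ext' fun x y => ?_
  calc F (x ⊗ₜ y) = F (lmulMap k A x (rmulMap k A y (1 ⊗ₜ 1))) := by simp
    _ = lmulMap k A x (rmulMap k A y (F (1 ⊗ₜ 1))) := by rw [hF.1, hF.2]
    _ = sandwich k A (F (1 ⊗ₜ 1)) (x ⊗ₜ y) := (sandwich_tmul _ x y).symm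

variable (k A) in
noncomputable def bimodEndEquiv : bimodEnd k A ≃ₗ[k] A ⊗[k] A where
  toFun F := F.1 (1 ⊗ₜ 1)
  map_add' _ _ := rfl
  map_smul' _ _ := rfl
  invFun w := ⟨sandwich k A w, sandwich_mem_bimodEnd w⟩
  left_inv F := Subtype.ext (eq_sandwich_of_mem_bimodEnd F.2).symm
  right_inv := sandwich_tmul_one_one

lemma coAct_tmul (c u v : A) {ι : Type*} (r : Coalgebra.Repr k c ι) :
    coAct k A c (u ⊗ₜ v) = ∑ i ∈ r.index, (r.left i * u) ⊗ₜ (v * antipode k (r.right i)) := by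
  simp [coAct, ← r.eq]

lemma coAct_apply (c : A) {ι : Type*} (r : Coalgebra.Repr k c ι) (w : A ⊗[k] A) :
    coAct k A c w =
      ∑ i ∈ r.index, lmulMap k A (r.left i) (rmulMap k A (antipode k (r.right i)) w) := by
  induction w using TensorProduct.induction_on with
  | zero => simp
  | tmul u v => simp [coAct_tmul c _ _ r]
  | add w w' hw hw' => simp only [map_add, hw, hw', Finset.sum_add_distrib]

lemma map_coAct_of_mem_bimodEnd (c : A) {F : A ⊗[k] A →ₗ[k] A ⊗[k] A} (hF : F ∈ bimodEnd k A)
    (w : A ⊗[k] A) : F (coAct k A c w) = coAct k A c (F w) := by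
  simp only [coAct_apply c (ℛ k c), map_sum, hF.1, hF.2]

lemma starAct_tmul_one_one (c : A) : starAct k A c (1 ⊗ₜ 1) = coAct k A c (1 ⊗ₜ 1) := by
  simp [starAct_tmul c _ _ (ℛ k c), coAct_tmul c _ _ (ℛ k c)]

end

/-- the operation `(c·F)(r) = F(r ⋆ c)` makes the space `H` of bimodule
endomorphisms of `A ⊗ₖ A` a left `A`-module, evaluation at `1 ⊗ 1` is a `k`-linear
bijection `H → A ⊗ₖ A`, and under this bijection the `A`-action on `H` corresponds to
the action `c·(u ⊗ v) = Σ c₍₁₎·u ⊗ v·S(c₍₂₎)` on `A ⊗ₖ A`. -/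
theorem bimodEnd_module_eval_bijective (k A : Type*) [Field k] [Ring A] [HopfAlgebra k A] :
    (∀ (c : A) (F : (A ⊗[k] A) →ₗ[k] A ⊗[k] A), F ∈ bimodEnd k A →
        F ∘ₗ starAct k A c ∈ bimodEnd k A) ∧
    (∀ F : (A ⊗[k] A) →ₗ[k] A ⊗[k] A, F ∘ₗ starAct k A (1 : A) = F) ∧
    (∀ (c c' : A) (F : (A ⊗[k] A) →ₗ[k] A ⊗[k] A),
        F ∘ₗ starAct k A (c * c') = (F ∘ₗ starAct k A c') ∘ₗ starAct k A c) ∧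
    (∀ (c c' : A) (F : (A ⊗[k] A) →ₗ[k] A ⊗[k] A),
        F ∘ₗ starAct k A (c + c') = F ∘ₗ starAct k A c + F ∘ₗ starAct k A c') ∧
    (∀ (t : k) (c : A) (F : (A ⊗[k] A) →ₗ[k] A ⊗[k] A),
        F ∘ₗ starAct k A (t • c) = t • (F ∘ₗ starAct k A c)) ∧
    (∀ (c : A) (F G : (A ⊗[k] A) →ₗ[k] A ⊗[k] A),
        (F + G) ∘ₗ starAct k A c = F ∘ₗ starAct k A c + G ∘ₗ starAct k A c) ∧
    Function.Bijective
      (fun F : bimodEnd k A => F.1 ((1 : A) ⊗ₜ[k] (1 : A))) ∧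
    ∀ (c : A) (F : (A ⊗[k] A) →ₗ[k] A ⊗[k] A), F ∈ bimodEnd k A →
      (F ∘ₗ starAct k A c) ((1 : A) ⊗ₜ[k] (1 : A)) =
        coAct k A c (F ((1 : A) ⊗ₜ[k] (1 : A))) := by
  refine ⟨fun c F hF => comp_mem_bimodEnd hF (starAct_mem_bimodEnd c),
    fun F => by rw [starAct_one, LinearMap.comp_id],
    fun c c' F => by rw [starAct_mul, LinearMap.comp_assoc],
    fun c c' F => by rw [starAct_add, LinearMap.comp_add],
    fun t c F => by rw [starAct_smul, LinearMap.comp_smul],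
    fun c F G => LinearMap.add_comp _ _ _,
    (bimodEndEquiv k A).bijective, fun c F hF => ?_⟩
  rw [LinearMap.comp_apply, starAct_tmul_one_one, map_coAct_of_mem_bimodEnd c hF]
end
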